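/- arXiv:cs/0304046 — 7 statements merged into one kernel-verified Lean document; each statement's English description precedes it below -/
import Mathlib

section
/- Soundness of the DSL axiom system: every DSL formula derivable in the DSL axiom system is valid, i.e., it is satisfied at every world of every DSL model. -/
namespace DSLPaper

/-- DSL formulae over a set `P` of propositional letters and `k` components. -/
inductive Formula (P : Type) (k : ℕ) : Type
  | atom : P → Formula P k
  | falsum : Formula P k
  | neg : Formula P k → Formula P k
  | conj : Formula P k → Formula P k → Formula P k
  | loc : Fin k → Formula P k → Formula P k

variable {P : Type} {k : ℕ}

/-- Material implication `F → G`, defined from `neg` and `conj`. -/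
def Formula.impl (F G : Formula P k) : Formula P k := .neg (.conj F (.neg G))

/-- Bi-implication `F ↔ G`. -/
def Formula.biimpl (F G : Formula P k) : Formula P k := .conj (F.impl G) (G.impl F)

/-- Disjunction `F ∨ F'`, abbreviating `∼(∼F ∧ ∼F')`. -/
def Formula.disj (F G : Formula P k) : Formula P k := .neg (.conj (.neg F) (.neg G))

/-- `⊤ = ∼⊥`. -/
def Formula.top : Formula P k := .neg .falsum

/-- The dual modality `m̄ᵢ F = ∼ mᵢ ∼F`. -/
def Formula.bar (i : Fin k) (F : Formula P k) : Formula P k := .neg (.loc i (.neg F))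

/-- A Boolean valuation on formulae respecting the propositional connectives
(atoms and located formulae are treated as opaque atoms). -/
def RespectsProp (v : Formula P k → Bool) : Prop :=
  v .falsum = false ∧ (∀ F : Formula P k, v (.neg F) = !v F) ∧
    (∀ F G : Formula P k, v (.conj F G) = (v F && v G))

/-- Propositional tautologies: true under every valuation respecting the connectives. -/
def Tautology (F : Formula P k) : Prop :=
  ∀ v : Formula P k → Bool, RespectsProp v → v F = true

/-- Derivability in the DSL axiom system: propositional tautologies (PC), axiom K,
axiom DSL1, axiom DSL2 (for distinct location operators), modus ponens, necessitation. -/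
inductive Derivable : Formula P k → Prop
  | taut {F : Formula P k} : Tautology F → Derivable F
  | axK (i : Fin k) (F G : Formula P k) :
      Derivable (((F.impl G).bar i).impl ((F.bar i).impl (G.bar i)))
  | dsl1 (i : Fin k) (F : Formula P k) :
      Derivable (((F.bar i).biimpl F).bar i)
  | dsl2 (i j : Fin k) : i ≠ j → Derivable ((Formula.falsum.bar j).bar i)
  | mp {F G : Formula P k} : Derivable F → Derivable (F.impl G) → Derivable G
  | nec (i : Fin k) {F : Formula P k} : Derivable F → Derivable (F.bar i)

/-- A DSL model `(W, R₁, …, R_k, V)` whose reachability relations satisfy the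
three conditions (1)–(3). -/
structure Model (P : Type) (k : ℕ) where
  W : Type
  R : Fin k → W → W → Prop
  V : W → Set P
  cond1 : ∀ i u v, R i u v → R i v v
  cond2 : ∀ i u v w, R i u v → R i v w → v = w
  cond3 : ∀ i u v, R i u v → ∀ j, j ≠ i → ∀ w, ¬ R j v w

/-- Satisfaction of a DSL formula at a world of a DSL model. -/
def Sat (M : Model P k) : M.W → Formula P k → Prop
  | u, .atom p => p ∈ M.V u
  | _, .falsum => False
  | u, .neg F => ¬ Sat M u F
  | u, .conj F G => Sat M u F ∧ Sat M u G
  | u, .loc i F => ∃ v, M.R i u v ∧ Sat M v F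

@[simp] lemma not_sat_falsum {M : Model P k} {u : M.W} : ¬ Sat M u .falsum := id

@[simp] lemma sat_neg {M : Model P k} {u : M.W} {F : Formula P k} :
    Sat M u (.neg F) ↔ ¬ Sat M u F := Iff.rfl

@[simp] lemma sat_conj {M : Model P k} {u : M.W} {F G : Formula P k} :
    Sat M u (.conj F G) ↔ Sat M u F ∧ Sat M u G := Iff.rfl

@[simp] lemma sat_impl {M : Model P k} {u : M.W} {F G : Formula P k} :
    Sat M u (F.impl G) ↔ (Sat M u F → Sat M u G) := by
  simp [Formula.impl, Sat]

@[simp] lemma sat_biimpl {M : Model P k} {u : M.W} {F G : Formula P k} :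
    Sat M u (F.biimpl G) ↔ (Sat M u F ↔ Sat M u G) := by
  simp only [Formula.biimpl, sat_conj, sat_impl, iff_def]

@[simp] lemma sat_bar {M : Model P k} {u : M.W} {i : Fin k} {F : Formula P k} :
    Sat M u (F.bar i) ↔ ∀ v, M.R i u v → Sat M v F := by
  simp [Formula.bar, Sat]

open Classical in
lemma respectsProp_sat (M : Model P k) (u : M.W) :
    RespectsProp (fun F => decide (Sat M u F)) := by
  refine ⟨?_, fun F => ?_, fun F G => ?_⟩ <;> simp

/-- A world `v` reached by `Rᵢ` sees only itself along `Rᵢ`, so `m̄ᵢ` is the identity there. -/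
lemma sat_bar_iff_of_R {M : Model P k} {i : Fin k} {u v : M.W} (huv : M.R i u v)
    (F : Formula P k) : Sat M v (F.bar i) ↔ Sat M v F := by
  rw [sat_bar]
  refine ⟨fun h => h v (M.cond1 i u v huv), fun h w hvw => ?_⟩
  rwa [← M.cond2 i u v w huv hvw]

def Valid (F : Formula P k) : Prop :=
  ∀ (M : Model P k) (u : M.W), Sat M u F

open Classical in
lemma Tautology.valid {F : Formula P k} (hF : Tautology F) : Valid F := fun M u => by
  simpa using hF _ (respectsProp_sat M u)

lemma valid_axK (i : Fin k) (F G : Formula P k) :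
    Valid (((F.impl G).bar i).impl ((F.bar i).impl (G.bar i))) := by
  intro M u
  simp only [sat_impl, sat_bar]
  exact fun hFG hF v huv => hFG v huv (hF v huv)

lemma valid_dsl1 (i : Fin k) (F : Formula P k) : Valid (((F.bar i).biimpl F).bar i) :=
  fun _ _ => sat_bar.mpr fun _ huv => sat_biimpl.mpr (sat_bar_iff_of_R huv F)

lemma valid_dsl2 {i j : Fin k} (hij : i ≠ j) : Valid (((.falsum : Formula P k).bar j).bar i) :=
  fun M u => sat_bar.mpr fun v huv => sat_bar.mpr fun w hvw =>
    absurd hvw (M.cond3 i u v huv j hij.symm w)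

lemma Valid.mp {F G : Formula P k} (hF : Valid F) (hFG : Valid (F.impl G)) : Valid G :=
  fun M u => sat_impl.mp (hFG M u) (hF M u)

lemma Valid.bar (i : Fin k) {F : Formula P k} (hF : Valid F) : Valid (F.bar i) :=
  fun M _ => sat_bar.mpr fun v _ => hF M v

theorem dsl_soundness_general {P : Type} {k : ℕ} (F : Formula P k)
    (h : Derivable F) : ∀ (M : Model P k) (u : M.W), Sat M u F := by
  induction h with
  | taut hF => exact hF.valid
  | axK i F G => exact valid_axK i F G
  | dsl1 i F => exact valid_dsl1 i F
  | dsl2 i j hij => exact valid_dsl2 hij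
  | mp _ _ ihF ihFG => exact Valid.mp ihF ihFG
  | nec i _ ihF => exact Valid.bar i ihF

/-- Soundness of the DSL axiom system: every derivable DSL formula is satisfied at
every world of every DSL model. -/
theorem dsl_soundness {P : Type} [Countable P] {k : ℕ} (F : Formula P k)
    (h : Derivable F) : ∀ (M : Model P k) (u : M.W), Sat M u F :=
  dsl_soundness_general F h

end DSLPaper
end

section
/- The canonical model of DSL satisfies reachability condition (1): for any two maximal consistent sets u, v of DSL formulae and any index i, if (u,v) ∈ Rᵢ^DSL then (v,v) ∈ Rᵢ^DSL. -/
namespace DSLPaper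

variable {P : Type} {k : ℕ}

/-- Conjunction of a finite list of formulae. -/
def listConj (l : List (Formula P k)) : Formula P k := l.foldr .conj .top

/-- A set of formulae is consistent if no finite conjunction of its members has a
derivable negation. -/
def Consistent (Γ : Set (Formula P k)) : Prop :=
  ∀ l : List (Formula P k), (∀ F ∈ l, F ∈ Γ) → ¬ Derivable (Formula.neg (listConj l))

/-- Maximal consistent set: consistent, and contains `F` or `∼F` for every formula `F`. -/
def MaxConsistent (Γ : Set (Formula P k)) : Prop :=
  Consistent Γ ∧ ∀ F : Formula P k, F ∈ Γ ∨ Formula.neg F ∈ Γ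

/-- The canonical reachability relation: `(u,v) ∈ Rᵢ^DSL` iff `m̄ᵢ F ∈ u` implies `F ∈ v`. -/
def canonR (i : Fin k) (u v : Set (Formula P k)) : Prop :=
  ∀ F : Formula P k, F.bar i ∈ u → F ∈ v


lemma mem_of_derivable_impl {Γ : Set (Formula P k)} (h : MaxConsistent Γ)
    {l : List (Formula P k)} (hl : ∀ F ∈ l, F ∈ Γ) {G : Formula P k}
    (hd : Derivable ((listConj l).impl G)) : G ∈ Γ := by
  rcases h.2 G with hG | hnG
  · exact hG
  · exfalso
    apply h.1 (Formula.neg G :: l)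
    · intro F hF
      rw [List.mem_cons] at hF
      rcases hF with rfl | hF
      · exact hnG
      · exact hl F hF
    · refine hd.mp (Derivable.taut ?_)
      intro w hw
      obtain ⟨h1, h2, h3⟩ := hw
      simp only [Formula.impl, listConj, List.foldr_cons, h2, h3]
      cases w (l.foldr Formula.conj Formula.top) <;> cases w G <;> simp

lemma mem_of_derivable {Γ : Set (Formula P k)} (h : MaxConsistent Γ)
    {G : Formula P k} (hd : Derivable G) : G ∈ Γ := by
  refine mem_of_derivable_impl h (l := []) (by simp) ?_
  refine hd.mp (Derivable.taut ?_)
  intro w hw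
  obtain ⟨h1, h2, h3⟩ := hw
  simp only [Formula.impl, listConj, List.foldr_nil, h2, h3]
  cases w G <;> simp

lemma mem_mp {Γ : Set (Formula P k)} (h : MaxConsistent Γ)
    {F G : Formula P k} (hF : F ∈ Γ) (hFG : F.impl G ∈ Γ) : G ∈ Γ := by
  refine mem_of_derivable_impl h (l := [F, F.impl G]) ?_ ?_
  · intro X hX
    simp only [List.mem_cons, List.not_mem_nil, or_false] at hX
    rcases hX with rfl | rfl
    · exact hF
    · exact hFG
  · refine Derivable.taut ?_
    intro w hw
    obtain ⟨h1, h2, h3⟩ := hw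
    simp only [Formula.impl, listConj, List.foldr_cons, List.foldr_nil, h2, h3]
    cases w F <;> cases w G <;> simp

lemma mem_conj_left {Γ : Set (Formula P k)} (h : MaxConsistent Γ)
    {F G : Formula P k} (hFG : F.conj G ∈ Γ) : F ∈ Γ := by
  refine mem_of_derivable_impl h (l := [F.conj G]) ?_ ?_
  · intro X hX
    simp only [List.mem_cons, List.not_mem_nil, or_false] at hX
    subst hX
    exact hFG
  · refine Derivable.taut ?_
    intro w hw
    obtain ⟨h1, h2, h3⟩ := hw
    simp only [Formula.impl, listConj, List.foldr_cons, List.foldr_nil, h2, h3]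
    cases w F <;> cases w G <;> simp

/-- The canonical model of DSL satisfies reachability condition (1):
if `(u,v) ∈ Rᵢ^DSL` then `(v,v) ∈ Rᵢ^DSL`. -/
theorem canonical_cond1 {P : Type} [Countable P] {k : ℕ}
    (u v : Set (Formula P k)) (hu : MaxConsistent u) (hv : MaxConsistent v)
    (i : Fin k) (h : canonR i u v) : canonR i v v := by
  intro F hF
  have h1 : ((F.bar i).biimpl F).bar i ∈ u := mem_of_derivable hu (Derivable.dsl1 i F)
  have h2 : (F.bar i).biimpl F ∈ v := h _ h1
  have h3 : (F.bar i).impl F ∈ v := mem_conj_left hv h2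
  exact mem_mp hv hF h3

end DSLPaper
end

section
/- The canonical model of DSL satisfies reachability condition (2): for any maximal consistent sets u, v, w of DSL formulae and any index i, if (u,v) ∈ Rᵢ^DSL and (v,w) ∈ Rᵢ^DSL then v = w. -/
namespace DSLPaper

variable {P : Type} {k : ℕ}

lemma mcs_mem_of_derivable {Γ : Set (Formula P k)} (hΓ : MaxConsistent Γ)
    {F : Formula P k} (hF : Derivable F) : F ∈ Γ := by
  rcases hΓ.2 F with h | h
  · exact h
  exfalso
  apply hΓ.1 [Formula.neg F] (by simpa using h)
  refine Derivable.mp hF (Derivable.taut ?_)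
  intro val ⟨h0, h1, h2⟩
  simp [Formula.impl, listConj, Formula.top, h0, h1, h2]

lemma mcs_mp {Γ : Set (Formula P k)} (hΓ : MaxConsistent Γ)
    {F G : Formula P k} (hF : F ∈ Γ) (hFG : F.impl G ∈ Γ) : G ∈ Γ := by
  rcases hΓ.2 G with h | h
  · exact h
  exfalso
  apply hΓ.1 [F, F.impl G, Formula.neg G]
    (by intro x hx; simp at hx; rcases hx with rfl | rfl | rfl <;> assumption)
  refine Derivable.taut ?_
  intro val ⟨h0, h1, h2⟩
  simp only [Formula.impl, listConj, Formula.top, List.foldr, h0, h1, h2]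
  cases hf : val F <;> cases hg : val G <;> simp [hf, hg]

lemma mcs_mp_deriv {Γ : Set (Formula P k)} (hΓ : MaxConsistent Γ)
    {F G : Formula P k} (hF : F ∈ Γ) (hFG : Derivable (F.impl G)) : G ∈ Γ :=
  mcs_mp hΓ hF (mcs_mem_of_derivable hΓ hFG)

lemma mcs_not_both {Γ : Set (Formula P k)} (hΓ : MaxConsistent Γ)
    {F : Formula P k} (hF : F ∈ Γ) (hF' : Formula.neg F ∈ Γ) : False := by
  apply hΓ.1 [F, Formula.neg F]
    (by intro x hx; simp at hx; rcases hx with rfl | rfl <;> assumption)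
  refine Derivable.taut ?_
  intro val ⟨h0, h1, h2⟩
  simp only [listConj, Formula.top, List.foldr, h0, h1, h2]
  cases hf : val F <;> simp [hf]

/-- From a bi-implication in a MCS, membership of the two sides is equivalent. -/
lemma mcs_biimpl {Γ : Set (Formula P k)} (hΓ : MaxConsistent Γ)
    {F G : Formula P k} (h : F.biimpl G ∈ Γ) : (F ∈ Γ ↔ G ∈ Γ) := by
  have h1 : F.impl G ∈ Γ := by
    refine mcs_mp hΓ h (mcs_mem_of_derivable hΓ (Derivable.taut ?_))
    intro val ⟨h0, h1, h2⟩
    simp only [Formula.biimpl, Formula.impl, h0, h1, h2]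
    cases hf : val (F.impl G) <;> simp [Formula.impl, h1, h2] at hf ⊢ <;> simp [hf]
  have h2 : G.impl F ∈ Γ := by
    refine mcs_mp hΓ h (mcs_mem_of_derivable hΓ (Derivable.taut ?_))
    intro val ⟨h0, h1, h2⟩
    simp only [Formula.biimpl, Formula.impl, h0, h1, h2]
    cases hf : val (G.impl F) <;> simp [Formula.impl, h1, h2] at hf ⊢ <;> simp [hf]
  exact ⟨fun hh => mcs_mp hΓ hh h1, fun hh => mcs_mp hΓ hh h2⟩

/-- The canonical model of DSL satisfies reachability condition (2):
if `(u,v) ∈ Rᵢ^DSL` and `(v,w) ∈ Rᵢ^DSL` then `v = w`. -/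
theorem canonical_cond2 {P : Type} [Countable P] {k : ℕ}
    (u v w : Set (Formula P k)) (hu : MaxConsistent u) (hv : MaxConsistent v)
    (hw : MaxConsistent w) (i : Fin k)
    (huv : canonR i u v) (hvw : canonR i v w) : v = w := by
  have key : ∀ F : Formula P k, F ∈ v → F ∈ w := by
    intro F hF
    have hd : ((F.bar i).biimpl F).bar i ∈ u :=
      mcs_mem_of_derivable hu (Derivable.dsl1 i F)
    have hb : (F.bar i).biimpl F ∈ v := huv _ hd
    have : F.bar i ∈ v := (mcs_biimpl hv hb).mpr hF
    exact hvw _ this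
  ext F
  constructor
  · exact key F
  · intro hF
    by_contra hFv
    rcases hv.2 F with h | h
    · exact hFv h
    · exact mcs_not_both hw hF (key _ h)

end DSLPaper
end

section
/- Axiom 4 is derivable in the DSL axiom system: for every DSL formula F and every location operator m, the formula m̄F → m̄m̄F is derivable. -/
namespace DSLPaper

variable {P : Type} {k : ℕ}

lemma taut_biimpl_to_conv {P : Type} {k : ℕ} (A B : Formula P k) :
    Tautology ((A.biimpl B).impl (B.impl A)) := by
  intro v ⟨h0, h1, h2⟩
  simp only [Formula.impl, Formula.biimpl, h1, h2]
  cases v A <;> cases v B <;> rfl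

/-- Axiom 4 is derivable: `m̄F → m̄m̄F`. -/
theorem axiom4_derivable {P : Type} [Countable P] {k : ℕ} (i : Fin k) (F F' F'' : Formula P k) :
    Derivable ((F.bar i).impl ((F.bar i).bar i)) := by
  have h2 := Derivable.nec i (Derivable.taut (taut_biimpl_to_conv (F.bar i) F))
  have h3 := Derivable.mp (Derivable.dsl1 i F)
    (Derivable.mp h2 (Derivable.axK i _ _))
  exact Derivable.mp h3 (Derivable.axK i F (F.bar i))

end DSLPaper
end

section
/- Soundness of the Notification rule of DSTL: for every DSTL model M over a computation, all DSL formulae F, G, G' and every component m, if M ⊨_T F because G, M ⊨_T G leads_to m G', and M ⊨_T stable (m G'), then M ⊨_T (F ∧ m⊤) leads_to m G'. -/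
namespace DSLPaper

variable {P : Type} {k : ℕ}

/-- A computation: states of each component `i` form a (finite or infinite) sequence
`sᵢ⁰, sᵢ¹, …` (each state is determined by its component and index, and the indices of
each component form a downward-closed subset of `ℕ`), together with communications
between states of distinct components. -/
structure Computation (P : Type) (k : ℕ) where
  State : Type
  comp : State → Fin k
  pos : State → ℕ
  state_ext : ∀ s t : State, comp s = comp t → pos s = pos t → s = t
  seq : ∀ s : State, ∀ j : ℕ, j ≤ pos s → ∃ t : State, comp t = comp s ∧ pos t = j
  comm : State → State → Prop
  comm_ne : ∀ s t : State, comm s t → comp s ≠ comp t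

/-- The next-state relation `R`: exactly the local-successor pairs and communications. -/
def Computation.nextR (C : Computation P k) (s t : C.State) : Prop :=
  (C.comp s = C.comp t ∧ C.pos t = C.pos s + 1) ∨ C.comm s t

/-- `R*`: reflexive-transitive closure of `R`. -/
def Computation.Rstar (C : Computation P k) : C.State → C.State → Prop :=
  Relation.ReflTransGen C.nextR

/-- `R⁼`: reflexive closure of `R`. -/
def Computation.Req (C : Computation P k) : C.State → C.State → Prop :=
  Relation.ReflGen C.nextR

/-- DSL satisfaction at a distributed state `ds ∈ DS = 2^S`; the valuation is given by
its values on singletons `V : State → 2^P`, with `V(ds) = ⋂_{s ∈ ds} V({s})` built in. -/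
def CSat (C : Computation P k) (V : C.State → Set P) : Set C.State → Formula P k → Prop
  | ds, .atom p => ∀ s ∈ ds, p ∈ V s
  | _, .falsum => False
  | ds, .neg F => ¬ CSat C V ds F
  | ds, .conj F G => CSat C V ds F ∧ CSat C V ds G
  | ds, .loc i F => ∃ s ∈ ds, C.comp s = i ∧ CSat C V {s} F

/-- `ds ≤ ds'`. -/
def dsLe (C : Computation P k) (ds ds' : Set C.State) : Prop :=
  (∀ s ∈ ds, ∃ s' ∈ ds', C.Rstar s s') ∧ (∀ s' ∈ ds', ∃ s ∈ ds, C.Rstar s s')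

/-- `ds ≤_c ds'`. -/
def dsLeC (C : Computation P k) (ds ds' : Set C.State) : Prop :=
  (∀ s ∈ ds, ∃ s' ∈ ds', C.Req s s') ∧ (∀ s' ∈ ds', ∃ s ∈ ds, C.Req s s')

/-- `M ⊨_T F leads_to F'`. -/
def LeadsTo (C : Computation P k) (V : C.State → Set P) (F F' : Formula P k) : Prop :=
  ∀ ds : Set C.State, CSat C V ds F → ∃ ds' : Set C.State, dsLe C ds ds' ∧ CSat C V ds' F'

/-- `M ⊨_T F because F'`. -/
def Because (C : Computation P k) (V : C.State → Set P) (F F' : Formula P k) : Prop :=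
  ∀ ds : Set C.State, CSat C V ds F → ∃ ds' : Set C.State, dsLe C ds' ds ∧ CSat C V ds' F'

/-- `M ⊨_T F unless F'`. -/
def Unless (C : Computation P k) (V : C.State → Set P) (F F' : Formula P k) : Prop :=
  ∀ ds : Set C.State, CSat C V ds F → ∃ ds' : Set C.State, dsLeC C ds ds' ∧
    ((¬ ds ⊆ ds' ∧ CSat C V ds' F) ∨ CSat C V ds' F')

/-- `stable F  :=  F unless ⊥`. -/
def Stable (C : Computation P k) (V : C.State → Set P) (F : Formula P k) : Prop :=
  Unless C V F .falsum

/-- Within a component, a state reaches any later state via local steps. -/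
lemma reach_aux (C : Computation P k) :
    ∀ d (t x : C.State), C.comp t = C.comp x → C.pos x = C.pos t + d → C.Rstar t x := by
  intro d
  induction d with
  | zero =>
    intro t x hc hp
    have : t = x := C.state_ext t x hc (by omega)
    subst this
    exact Relation.ReflTransGen.refl
  | succ d ih =>
    intro t x hc hp
    obtain ⟨y, hyc, hyp⟩ := C.seq x (C.pos t + d) (by omega)
    have h1 : C.Rstar t y := ih t y (by rw [hc, ← hyc]) hyp
    exact h1.tail (Or.inl ⟨hyc, by omega⟩)

/-- Using stability, climb `n` steps within component `m` preserving `G'`. -/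
lemma climb_aux (C : Computation P k) (V : C.State → Set P) (G' : Formula P k) (m : Fin k)
    (h3 : Stable C V (Formula.loc m G')) :
    ∀ n (x : C.State), C.comp x = m → CSat C V {x} G' →
      ∃ y : C.State, C.comp y = m ∧ C.pos y = C.pos x + n ∧ CSat C V {y} G' := by
  intro n
  induction n with
  | zero => intro x hc hG'; exact ⟨x, hc, by omega, hG'⟩
  | succ n ih =>
    intro x hc hG'
    obtain ⟨ds'', hle, hdisj⟩ := h3 {x} ⟨x, rfl, hc, hG'⟩
    rcases hdisj with ⟨hns, hsat⟩ | hfalse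
    · obtain ⟨x', hx'mem, hx'c, hx'G'⟩ := hsat
      obtain ⟨s, hs, hreq⟩ := hle.2 x' hx'mem
      have hsx : s = x := hs
      have hreq' : C.Req x x' := hsx ▸ hreq
      have hxne : x' ≠ x := by
        intro h
        exact hns (fun z hz => by rw [Set.mem_singleton_iff] at hz; rw [hz, ← h]; exact hx'mem)
      cases hreq' with
      | refl => exact absurd rfl hxne
      | single hstep =>
        rcases hstep with ⟨hceq, hpeq⟩ | hcomm
        · obtain ⟨y, hyc, hyp, hyG'⟩ := ih x' hx'c hx'G'
          exact ⟨y, hyc, by omega, hyG'⟩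
        · exact absurd (hx'c.trans hc.symm).symm (C.comm_ne x x' hcomm)
    · exact absurd hfalse (by simp [CSat])

/-- Soundness of the Notification rule: if `F because G`, `G leads_to m G'`, and
`stable (m G')` hold in a DSTL model, then `(F ∧ m⊤) leads_to m G'` holds. -/
theorem notif_sound {P : Type} [Countable P] {k : ℕ} (C : Computation P k)
    (V : C.State → Set P) (F G G' : Formula P k) (m : Fin k)
    (h1 : Because C V F G)
    (h2 : LeadsTo C V G (Formula.loc m G'))
    (h3 : Stable C V (Formula.loc m G')) :
    LeadsTo C V (F.conj (Formula.loc m Formula.top)) (Formula.loc m G') := by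
  rintro ds ⟨hF, t, htds, htm, -⟩
  obtain ⟨ds₀, h0le, hG⟩ := h1 ds hF
  obtain ⟨ds₁, h01, s₁, hs₁, hs₁c, hs₁G'⟩ := h2 ds₀ hG
  obtain ⟨x, hxc, hxp, hxG'⟩ := climb_aux C V G' m h3 (C.pos t) s₁ hs₁c hs₁G'
  have hreach : C.Rstar t x := reach_aux C (C.pos s₁) t x (htm.trans hxc.symm) (by omega)
  refine ⟨insert x ds, ⟨?_, ?_⟩, x, Set.mem_insert x ds, hxc, hxG'⟩
  · exact fun s hs => ⟨s, Set.mem_insert_of_mem x hs, Relation.ReflTransGen.refl⟩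
  · rintro s' hs'
    rcases hs' with h | h
    · exact ⟨t, htds, h ▸ hreach⟩
    · exact ⟨s', h, Relation.ReflTransGen.refl⟩

end DSLPaper
end

section
/- Soundness of the Confluence rule of DSTL: for every DSTL model M over a computation, all DSL formulae F, F' and every component m, if M ⊨_T stable (m F) and M ⊨_T stable (m F'), then M ⊨_T (m F ∧ m F') → m(F ∧ F'). -/
namespace DSLPaper

variable {P : Type} {k : ℕ}

lemma stable_step {C : Computation P k} {V : C.State → Set P} {F : Formula P k} {m : Fin k}
    (h : Stable C V (Formula.loc m F)) {u : C.State} (hc : C.comp u = m)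
    (hF : CSat C V {u} F) :
    ∃ u', C.comp u' = m ∧ C.pos u' = C.pos u + 1 ∧ CSat C V {u'} F := by
  obtain ⟨ds', ⟨hle1, hle2⟩, hcase⟩ := h {u} ⟨u, rfl, hc, hF⟩
  rcases hcase with ⟨hns, u', hu', hcm, hF'⟩ | hfalse
  · obtain ⟨s, hs, hreq⟩ := hle2 u' hu'
    rcases hs with rfl
    cases hreq with
    | refl => exact absurd (fun x hx => by rcases hx with rfl; exact hu') hns
    | single hnext =>
      rcases hnext with ⟨hcomp, hpos⟩ | hcomm
      · exact ⟨u', hcm, hpos, hF'⟩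
      · exact absurd (hc.trans hcm.symm) (C.comm_ne _ _ hcomm)
  · exact hfalse.elim

lemma stable_iter {C : Computation P k} {V : C.State → Set P} {F : Formula P k} {m : Fin k}
    (h : Stable C V (Formula.loc m F)) {u : C.State} (hc : C.comp u = m)
    (hF : CSat C V {u} F) :
    ∀ n : ℕ, ∃ u', C.comp u' = m ∧ C.pos u' = C.pos u + n ∧ CSat C V {u'} F := by
  intro n
  induction n with
  | zero => exact ⟨u, hc, rfl, hF⟩
  | succ n ih =>
    obtain ⟨v, hvc, hvp, hvF⟩ := ih
    obtain ⟨w, hwc, hwp, hwF⟩ := stable_step h hvc hvF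
    exact ⟨w, hwc, by omega, hwF⟩

lemma reach_state {C : Computation P k} {V : C.State → Set P} {F : Formula P k} {m : Fin k}
    (h : Stable C V (Formula.loc m F)) {u t : C.State} (hc : C.comp u = m)
    (hF : CSat C V {u} F) (htc : C.comp t = m) (hle : C.pos u ≤ C.pos t) :
    CSat C V {t} F := by
  obtain ⟨u', hc', hp', hF'⟩ := stable_iter h hc hF (C.pos t - C.pos u)
  have : u' = t := C.state_ext u' t (hc'.trans htc.symm) (by omega)
  exact this ▸ hF'

/-- Soundness of the Confluence rule: if `stable (m F)` and `stable (m F')` hold in a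
DSTL model, then the formula `(m F ∧ m F') → m(F ∧ F')` holds at every distributed state. -/
theorem conf_sound {P : Type} [Countable P] {k : ℕ} (C : Computation P k)
    (V : C.State → Set P) (F F' : Formula P k) (m : Fin k)
    (h1 : Stable C V (Formula.loc m F))
    (h2 : Stable C V (Formula.loc m F')) :
    ∀ ds : Set C.State,
      CSat C V ds (((Formula.loc m F).conj (Formula.loc m F')).impl
        (Formula.loc m (F.conj F'))) := by
  intro ds
  simp only [Formula.impl, CSat, not_and, not_not]
  rintro ⟨⟨s, hs, hsc, hsF⟩, t, ht, htc, htF'⟩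
  rcases le_total (C.pos s) (C.pos t) with hle | hle
  · exact ⟨t, ht, htc, reach_state h1 hsc hsF htc hle, htF'⟩
  · exact ⟨s, hs, hsc, hsF, reach_state h2 htc htF' hsc hle⟩

end DSLPaper
end

section
/- Unsoundness of the rule inferring F from m̄₁F, …, m̄_kF: there exist a DSTL model M and a DSL formula F such that M ⊨_T m̄ᵢ F for every component i but not M ⊨_T F. Concretely, in the computation with a single component m whose states are s₀, s₁, s₂, … with valuation p ∈ V({s₀}), p ∉ V({sⱼ}) for j ≥ 1, q ∈ V({sⱼ}) for j ≥ 1, and q ∉ V({s₀}), the formula m̄(p ∨ q) is satisfied by every distributed state, but the distributed state {s₀, s₁} does not satisfy p ∨ q. -/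
namespace DSLPaper

variable {P : Type} {k : ℕ}

/-- The concrete computation with a single component whose states are `s₀, s₁, s₂, …`
(`State = ℕ`, `comp` constant, `pos = id`, no communications). -/
def exComp : Computation Bool 1 where
  State := ℕ
  comp := fun _ => 0
  pos := id
  state_ext := fun _ _ _ h => h
  seq := fun s j _ => ⟨j, rfl, rfl⟩
  comm := fun _ _ => False
  comm_ne := fun _ _ h => h.elim

/-- The valuation: the atom `true` plays `p` and holds exactly at `s₀`; the atom
`false` plays `q` and holds exactly at the `sⱼ` with `j ≥ 1`. -/
def exV : ℕ → Set Bool := fun n => if n = 0 then {true} else {false}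

section Semantics

variable (C : Computation P k) (V : C.State → Set P)

@[simp]
theorem CSat_disj (ds : Set C.State) (F G : Formula P k) :
    CSat C V ds (F.disj G) ↔ CSat C V ds F ∨ CSat C V ds G := by
  simp only [Formula.disj, CSat]
  tauto

@[simp]
theorem CSat_bar (ds : Set C.State) (i : Fin k) (F : Formula P k) :
    CSat C V ds (F.bar i) ↔ ∀ s ∈ ds, C.comp s = i → CSat C V {s} F := by
  simp [Formula.bar, CSat]

theorem CSat_bar_of_forall_singleton {F : Formula P k} (hF : ∀ s, CSat C V {s} F)
    (i : Fin k) (ds : Set C.State) : CSat C V ds (F.bar i) :=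
  (CSat_bar C V ds i F).2 fun s _ _ => hF s

end Semantics

theorem exV_singleton_sat_disj (s : ℕ) :
    CSat exComp exV {s} ((Formula.atom true).disj (Formula.atom false)) := by
  refine (CSat_disj _ _ _ _ _).2 ?_
  rcases Nat.eq_zero_or_pos s with rfl | hs
  · exact Or.inl fun t (ht : t = (0 : ℕ)) => by simp [ht, exV]
  · exact Or.inr fun t (ht : t = s) => by simp [ht, exV, hs.ne']

/-- An atom holds at a distributed state only if it holds at each of its states, so `p` fails
at `s₁` and `q` fails at `s₀`. -/
theorem exV_not_sat_disj_pair :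
    ¬ CSat exComp exV ({0, 1} : Set ℕ) ((Formula.atom true).disj (Formula.atom false)) := by
  intro h
  rcases (CSat_disj _ _ _ _ _).1 h with h | h
  · simpa [exV] using h (1 : ℕ) (Or.inr rfl)
  · simpa [exV] using h (0 : ℕ) (Or.inl rfl)

/-- Unsoundness of the rule inferring `F` from `m̄₁F, …, m̄_kF`: in the concrete
single-component model, `m̄(p ∨ q)` is satisfied by every distributed state, but the
distributed state `{s₀, s₁}` does not satisfy `p ∨ q`; hence there exist a DSTL model
`M` and a DSL formula `F` with `M ⊨_T m̄ᵢ F` for every component `i` but not `M ⊨_T F`. -/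
theorem unsound_rule :
    (∀ ds : Set exComp.State,
      CSat exComp exV ds
        (((Formula.atom true).disj (Formula.atom false)).bar 0)) ∧
    ¬ CSat exComp exV ({0, 1} : Set ℕ)
        ((Formula.atom true).disj (Formula.atom false)) ∧
    ∃ (Cm : Computation Bool 1) (Vm : Cm.State → Set Bool) (Fm : Formula Bool 1),
      (∀ i : Fin 1, ∀ ds : Set Cm.State, CSat Cm Vm ds (Fm.bar i)) ∧
      ¬ (∀ ds : Set Cm.State, CSat Cm Vm ds Fm) := by
  have hbar := CSat_bar_of_forall_singleton exComp exV exV_singleton_sat_disj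
  exact ⟨hbar 0, exV_not_sat_disj_pair, exComp, exV, _, hbar,
    fun h => exV_not_sat_disj_pair (h _)⟩

end DSLPaper
end
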